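/- (Series estimates for B_ν) Let ν > -1. For every real x with 0 ≤ x ≤ 2√(ν+2) one has the chain of inequalities 0 ≤ x/(2(ν+1)) - x³/(8(ν+1)(ν+2)) ≤ B_ν(x) ≤ x/(2(ν+1)). -/
import Mathlib

noncomputable section

/-- `B_ν(x) = ∑ (-1)^n (x/2)^{2n+1} / (n! (ν+1)⋯(ν+n+1))` (restricted to real `x`). -/
def BbesselR (ν : ℝ) (x : ℝ) : ℝ :=
  ∑' n : ℕ, ((-1) ^ n * (x / 2) ^ (2 * n + 1)) /
    ((n.factorial : ℝ) * ∏ i ∈ Finset.range (n + 1), (ν + i + 1))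

theorem Bbessel_series_estimates (ν : ℝ) (hν : -1 < ν) (x : ℝ)
    (hx0 : 0 ≤ x) (hx1 : x ≤ 2 * Real.sqrt (ν + 2)) :
    0 ≤ x / (2 * (ν + 1)) - x ^ 3 / (8 * (ν + 1) * (ν + 2)) ∧
    x / (2 * (ν + 1)) - x ^ 3 / (8 * (ν + 1) * (ν + 2)) ≤ BbesselR ν x ∧
    BbesselR ν x ≤ x / (2 * (ν + 1)) := by
  have hν1 : (0:ℝ) < ν + 1 := by linarith
  have hν2 : (0:ℝ) < ν + 2 := by linarith
  set f : ℕ → ℝ := fun n => (x / 2) ^ (2 * n + 1) /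
      ((n.factorial : ℝ) * ∏ i ∈ Finset.range (n + 1), (ν + i + 1)) with hf
  have hP : ∀ n : ℕ, (0:ℝ) < ∏ i ∈ Finset.range (n + 1), (ν + i + 1) := by
    intro n
    refine Finset.prod_pos fun i _ => ?_
    have : (0:ℝ) ≤ i := Nat.cast_nonneg i
    linarith
  have hfpos : ∀ n, 0 ≤ f n := by
    intro n
    apply div_nonneg (pow_nonneg (by linarith) _)
    exact (mul_pos (by exact_mod_cast n.factorial_pos) (hP n)).le
  -- key: (x/2)^2 ≤ ν + 2
  have hxsq : (x / 2) ^ 2 ≤ ν + 2 := by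
    have h1 : x / 2 ≤ Real.sqrt (ν + 2) := by linarith
    calc (x / 2) ^ 2 ≤ Real.sqrt (ν + 2) ^ 2 := by
          apply pow_le_pow_left₀ (by linarith) h1
      _ = ν + 2 := Real.sq_sqrt hν2.le
  -- recurrence
  have hrec : ∀ n : ℕ, f (n + 1) = f n * ((x / 2) ^ 2 / ((n + 1) * (ν + (n + 1) + 1))) := by
    intro n
    have hfac : ((n + 1).factorial : ℝ) = (n + 1) * n.factorial := by
      rw [Nat.factorial_succ]; push_cast; ring
    have hprod : ∏ i ∈ Finset.range (n + 2), (ν + i + 1)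
        = (∏ i ∈ Finset.range (n + 1), (ν + i + 1)) * (ν + ((n:ℝ) + 1) + 1) := by
      rw [Finset.prod_range_succ]; push_cast; ring
    simp only [hf]
    rw [hfac, hprod, show 2 * (n + 1) + 1 = (2 * n + 1) + 2 by ring, pow_add,
      div_mul_div_comm]
    congr 1
    ring
  have hden : ∀ n : ℕ, ν + 2 ≤ ((n:ℝ) + 1) * (ν + (n + 1) + 1) := by
    intro n
    have hn : (0:ℝ) ≤ n := Nat.cast_nonneg n
    nlinarith
  have hanti : Antitone f := by
    apply antitone_nat_of_succ_le
    intro n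
    rw [hrec n]
    have hn : (0:ℝ) ≤ n := Nat.cast_nonneg n
    have hd : (0:ℝ) < ((n:ℝ) + 1) * (ν + (n + 1) + 1) :=
      mul_pos (by positivity) (by linarith)
    have : (x / 2) ^ 2 / (((n:ℝ) + 1) * (ν + (n + 1) + 1)) ≤ 1 := by
      rw [div_le_one hd]
      calc (x / 2) ^ 2 ≤ ν + 2 := hxsq
        _ ≤ _ := hden n
    calc f n * ((x / 2) ^ 2 / (((n:ℝ) + 1) * (ν + (n + 1) + 1)))
        ≤ f n * 1 := by
          apply mul_le_mul_of_nonneg_left this (hfpos n)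
      _ = f n := mul_one _
  have hsumf : Summable f := by
    apply summable_of_ratio_norm_eventually_le (r := 1/2) (by norm_num)
    have hev : ∀ᶠ n : ℕ in Filter.atTop, 2 * (x / 2) ^ 2 ≤ (n : ℝ) + 1 := by
      filter_upwards [Filter.eventually_ge_atTop ⌈2 * (x / 2) ^ 2⌉₊] with n hn
      calc 2 * (x / 2) ^ 2 ≤ (⌈2 * (x / 2) ^ 2⌉₊ : ℝ) := Nat.le_ceil _
        _ ≤ (n : ℝ) := by exact_mod_cast hn
        _ ≤ (n : ℝ) + 1 := by linarith
    filter_upwards [hev] with n hn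
    rw [Real.norm_of_nonneg (hfpos (n+1)), Real.norm_of_nonneg (hfpos n), hrec n]
    have hnn : (0:ℝ) ≤ n := Nat.cast_nonneg n
    have hd : (0:ℝ) < ((n:ℝ) + 1) * (ν + (n + 1) + 1) :=
      mul_pos (by positivity) (by linarith)
    have h1 : (ν + ((n:ℝ) + 1) + 1) ≥ 1 := by linarith
    have hmult : (x / 2) ^ 2 / (((n:ℝ) + 1) * (ν + (n + 1) + 1)) ≤ 1/2 := by
      rw [div_le_iff₀ hd]
      calc (x / 2) ^ 2 ≤ ((n:ℝ) + 1) / 2 := by linarith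
        _ ≤ 1/2 * (((n:ℝ) + 1) * (ν + (n + 1) + 1)) := by nlinarith
    calc f n * ((x / 2) ^ 2 / (((n:ℝ) + 1) * (ν + (n + 1) + 1)))
        ≤ f n * (1/2) := mul_le_mul_of_nonneg_left hmult (hfpos n)
      _ = 1/2 * f n := by ring
  -- summability of the signed series
  set g : ℕ → ℝ := fun n => ((-1) ^ n * (x / 2) ^ (2 * n + 1)) /
      ((n.factorial : ℝ) * ∏ i ∈ Finset.range (n + 1), (ν + i + 1)) with hg
  have hgf : ∀ n, g n = (-1) ^ n * f n := by
    intro n; simp only [hg, hf]; ring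
  have hsumg : Summable g := by
    apply Summable.of_norm
    have : ∀ n, ‖g n‖ = f n := by
      intro n
      rw [hgf n, norm_mul, norm_pow, norm_neg, norm_one, one_pow, one_mul,
        Real.norm_of_nonneg (hfpos n)]
    simpa [this] using hsumf
  have hf0 : Filter.Tendsto f Filter.atTop (nhds 0) := hsumf.tendsto_atTop_zero
  have hB : BbesselR ν x = ∑' n, g n := rfl
  have hfl : Filter.Tendsto (fun n => ∑ i ∈ Finset.range n, (-1) ^ i * f i)
      Filter.atTop (nhds (BbesselR ν x)) := by
    have := hsumg.hasSum.tendsto_sum_nat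
    rw [← hB] at this
    simpa only [hgf] using this
  -- values of f 0 and f 1
  have hf0val : f 0 = x / (2 * (ν + 1)) := by
    simp only [hf]
    norm_num [Finset.prod_range_one]
    rw [div_div]
  have hf1val : f 1 = x ^ 3 / (8 * (ν + 1) * (ν + 2)) := by
    simp only [hf]
    rw [Finset.prod_range_succ, Finset.prod_range_one]
    norm_num
    rw [div_pow, div_div]
    norm_num
    ring_nf
  have hlower := hanti.alternating_series_le_tendsto hfl 1
  have hupper := hanti.tendsto_le_alternating_series hfl 0
  rw [show 2 * 1 = 2 by norm_num, Finset.sum_range_succ, Finset.sum_range_one] at hlower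
  rw [show 2 * 0 + 1 = 1 by norm_num, Finset.sum_range_one] at hupper
  simp only [pow_zero, pow_one, one_mul, neg_one_mul] at hlower hupper
  have h01 : f 1 ≤ f 0 := hanti (by norm_num)
  refine ⟨?_, ?_, ?_⟩
  · rw [← hf0val, ← hf1val]; linarith
  · rw [← hf0val, ← hf1val]; linarith
  · rw [← hf0val]; linarith

end
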